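/- arXiv:2102.00745 — 6 statements merged into one kernel-verified Lean document; each statement's English description precedes it below -/
import Mathlib

section
/- If a word A over an alphabet admits two factorizations A = B_{j1}·B_{j2}·⋯·B_{jp} = B'_{m1}·B'_{m2}·⋯·B'_{ms} into words from a fixed list of pairwise non-overlapping, distinct, non-empty words, then p = s and B_{ji} = B'_{mi} for all i. -/
/-- Two words overlap if `X = M·N` and `Y = N·L` where `N` and `M·L` are non-empty. -/
def Overlap {α : Type*} (X Y : List α) : Prop :=
  ∃ M N L : List α, X = M ++ N ∧ Y = N ++ L ∧ N ≠ [] ∧ M ++ L ≠ []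

theorem prefix_eq_of_no_overlap {α : Type*} {x y : List α} (hx : x ≠ [])
    (hno : ¬ Overlap x y) (hp : x <+: y) : x = y := by
  obtain ⟨L, hL⟩ := hp
  rcases eq_or_ne L [] with rfl | hL0
  · simpa using hL
  · exact absurd ⟨[], x, L, by simp, hL.symm, hx, by simpa using hL0⟩ hno

/-- Makanin, Lemma 7: a word admits at most one factorization into words from a fixed
list of pairwise non-overlapping, pairwise distinct, non-empty words: if
`A = B_{j1}⋯B_{jp} = B'_{m1}⋯B'_{ms}` then `p = s` and `B_{ji} = B'_{mi}` for all `i`. -/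
theorem stmt_1 {α : Type*} (B : List (List α))
    (hne : ∀ w ∈ B, w ≠ []) (hnd : B.Nodup)
    (hno : ∀ x ∈ B, ∀ y ∈ B, ¬ Overlap x y)
    (u v : List (List α)) (hu : ∀ w ∈ u, w ∈ B) (hv : ∀ w ∈ v, w ∈ B)
    (h : u.flatten = v.flatten) : u = v := by
  induction u generalizing v with
  | nil =>
    cases v with
    | nil => rfl
    | cons y v' =>
      exfalso
      have : y ++ v'.flatten = ([] : List α) := by simpa using h.symm
      exact hne y (hv y (by simp)) (by
        rcases List.append_eq_nil_iff.mp this with ⟨h1, _⟩; exact h1)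
  | cons x u' ih =>
    cases v with
    | nil =>
      exfalso
      have : x ++ u'.flatten = ([] : List α) := by simpa using h
      exact hne x (hu x (by simp)) (by
        rcases List.append_eq_nil_iff.mp this with ⟨h1, _⟩; exact h1)
    | cons y v' =>
      have hxB := hu x (by simp)
      have hyB := hv y (by simp)
      have hxy : x = y := by
        have h' : x ++ u'.flatten = y ++ v'.flatten := by simpa using h
        have hx1 : x <+: (y ++ v'.flatten) := ⟨u'.flatten, h'⟩
        have hy1 : y <+: (y ++ v'.flatten) := ⟨v'.flatten, rfl⟩
        rcases List.prefix_or_prefix_of_prefix hx1 hy1 with hp | hp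
        · exact prefix_eq_of_no_overlap (hne x hxB) (hno x hxB y hyB) hp
        · exact (prefix_eq_of_no_overlap (hne y hyB) (hno y hyB x hxB) hp).symm
      subst hxy
      have h' : u'.flatten = v'.flatten := by
        have := h
        simp only [List.flatten_cons] at this
        exact List.append_cancel_left this
      rw [ih v' (fun w hw => hu w (by simp [hw])) (fun w hw => hv w (by simp [hw])) h']
end

section
/- If a pair of words (Y_{v1}, Y_{v2}) from a list Y_1, …, Y_t of non-empty words overlap, with Y_{v1} = M·N and Y_{v2} = N·L where N and M·L are non-empty, then the parameter ω of the list obtained from Y_1, …, Y_t by removing Y_{v1} and Y_{v2}, appending M, N, L, removing empty words, and removing duplicates, is strictly less than the parameter ω of the original list. -/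
/-- The parameter ω of a list of words: the sum of (length − 1) over its members. -/
def omegaParam {α : Type*} (l : List (List α)) : ℕ :=
  (l.map (fun w => w.length - 1)).sum

/-!
ω is additive and monotone under taking sublists, so filtering and deduplicating can only lower
it. Replacing `M·N` and `N·L` by `M`, `N`, `L` turns the contribution `(m + n - 1) + (n + l - 1)`
into at most `(m - 1) + (n - 1) + (l - 1)`, which is strictly smaller because `n ≥ 1` and
`m + l ≥ 1`.
-/

section omegaParam

variable {α : Type*}

@[simp]
lemma omegaParam_nil : omegaParam ([] : List (List α)) = 0 := rfl

@[simp]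
lemma omegaParam_cons (w : List α) (l : List (List α)) :
    omegaParam (w :: l) = (w.length - 1) + omegaParam l := by
  simp [omegaParam]

lemma omegaParam_append (l₁ l₂ : List (List α)) :
    omegaParam (l₁ ++ l₂) = omegaParam l₁ + omegaParam l₂ := by
  simp [omegaParam]

lemma List.Sublist.omegaParam_le {l₁ l₂ : List (List α)} (h : l₁.Sublist l₂) :
    omegaParam l₁ ≤ omegaParam l₂ :=
  (h.map _).sum_le_sum fun _ _ => Nat.zero_le _

lemma List.Perm.omegaParam_eq {l₁ l₂ : List (List α)} (h : l₁.Perm l₂) :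
    omegaParam l₁ = omegaParam l₂ :=
  (h.map _).sum_eq

lemma omegaParam_eq_of_mem [DecidableEq α] {w : List α} {l : List (List α)} (h : w ∈ l) :
    omegaParam l = (w.length - 1) + omegaParam (l.erase w) := by
  rw [(List.perm_cons_erase h).omegaParam_eq, omegaParam_cons]

lemma omegaParam_split_lt {M N L : List α} (hN : N ≠ []) (hML : M ++ L ≠ []) :
    omegaParam [M, N, L] < omegaParam [M ++ N, N ++ L] := by
  have hn : 0 < N.length := List.length_pos_of_ne_nil hN
  have hml : 0 < M.length + L.length := by
    simpa using List.length_pos_of_ne_nil hML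
  simp only [omegaParam_cons, omegaParam_nil, List.length_append]
  omega

end omegaParam

theorem stmt_2_general {α : Type*} [DecidableEq α] (Y : List (List α))
    (Y1 Y2 M N L : List α)
    (h1 : Y1 ∈ Y) (h2 : Y2 ∈ Y.erase Y1)
    (hY1 : Y1 = M ++ N) (hY2 : Y2 = N ++ L) (hN : N ≠ []) (hML : M ++ L ≠ []) :
    omegaParam (((((Y.erase Y1).erase Y2) ++ [M, N, L]).filter (fun w => !w.isEmpty)).dedup)
      < omegaParam Y := by
  have hY : omegaParam Y = omegaParam ((Y.erase Y1).erase Y2) + omegaParam [Y1, Y2] := by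
    rw [omegaParam_eq_of_mem h1, omegaParam_eq_of_mem h2]
    simp only [omegaParam_cons, omegaParam_nil]
    omega
  set A := (Y.erase Y1).erase Y2
  calc omegaParam (((A ++ [M, N, L]).filter (fun w => !w.isEmpty)).dedup)
      ≤ omegaParam (A ++ [M, N, L]) :=
        ((List.dedup_sublist _).trans List.filter_sublist).omegaParam_le
    _ = omegaParam A + omegaParam [M, N, L] := omegaParam_append _ _
    _ < omegaParam A + omegaParam [Y1, Y2] := by
        rw [hY1, hY2]
        exact Nat.add_lt_add_left (omegaParam_split_lt hN hML) _
    _ = omegaParam Y := hY.symm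

/-- Makanin, Lemma 1: if a pair of words `(Y₁, Y₂)` from a list of non-empty words overlap,
with `Y₁ = M·N`, `Y₂ = N·L`, `N` and `M·L` non-empty, then removing `Y₁` and `Y₂` from the
list, appending `M, N, L`, removing empty words and removing duplicates strictly decreases
the parameter ω. -/
theorem stmt_2 {α : Type*} [DecidableEq α] (Y : List (List α))
    (hne : ∀ w ∈ Y, w ≠ []) (Y1 Y2 M N L : List α)
    (h1 : Y1 ∈ Y) (h2 : Y2 ∈ Y.erase Y1)
    (hY1 : Y1 = M ++ N) (hY2 : Y2 = N ++ L) (hN : N ≠ []) (hML : M ++ L ≠ []) :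
    omegaParam (((((Y.erase Y1).erase Y2) ++ [M, N, L]).filter (fun w => !w.isEmpty)).dedup)
      < omegaParam Y :=
  stmt_2_general Y Y1 Y2 M N L h1 h2 hY1 hY2 hN hML
end

section
/- The process that repeatedly takes the earliest overlapping pair (Y_{v1}, Y_{v2}) in a reduced list of words, replaces Y_{v1} = M·N, Y_{v2} = N·L by appending M, N, L and removing Y_{v1}, Y_{v2}, then removes empties and duplicates, terminates after finitely many steps in a list with no overlapping pair. -/
/-- One step of the division algorithm Δ: pick an overlapping pair `Y₁ = M·N`, `Y₂ = N·L`
from the list, remove the pair, append `M, N, L`, remove empty words and duplicates. -/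
def DeltaStep {α : Type*} [DecidableEq α] (l l' : List (List α)) : Prop :=
  ∃ Y1 Y2 M N L : List α, Y1 ∈ l ∧ Y2 ∈ l ∧
    Y1 = M ++ N ∧ Y2 = N ++ L ∧ N ≠ [] ∧ M ++ L ≠ [] ∧
    l' = ((((l.erase Y1).erase Y2) ++ [M, N, L]).filter (fun w => !w.isEmpty)).dedup

/-- A reduced list: all words non-empty and pairwise distinct. -/
def ReducedList {α : Type*} (l : List (List α)) : Prop :=
  (∀ w ∈ l, w ≠ []) ∧ l.Nodup

theorem Relation.exists_reflTransGen_of_wellFounded {β : Type*} {r : β → β → Prop}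
    {P : β → Prop} (hwf : WellFounded (flip r)) (hstep : ∀ a, ¬ P a → ∃ b, r a b) (a : β) :
    ∃ b, Relation.ReflTransGen r a b ∧ P b := by
  induction a using hwf.induction with
  | _ a ih =>
    by_cases ha : P a
    · exact ⟨a, .refl, ha⟩
    · obtain ⟨b, hab⟩ := hstep a ha
      obtain ⟨c, hbc, hc⟩ := ih b hab
      exact ⟨c, .head hab hbc, hc⟩

lemma three_pow_add_three_pow_add_three_pow_lt {a b c : ℕ} (hb : 0 < b) (hac : 0 < a + c) :
    3 ^ a + 3 ^ b + 3 ^ c < 3 ^ (a + b) + 3 ^ (b + c) := by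
  have hy : 3 ≤ 3 ^ b := le_self_pow₀ (by norm_num) (by omega)
  have hS : 4 ≤ 3 ^ a + 3 ^ c := by
    rcases Nat.eq_zero_or_pos a with rfl | ha
    · have : 3 ≤ 3 ^ c := le_self_pow₀ (by norm_num) (by omega)
      rw [pow_zero]
      omega
    · have : 3 ≤ 3 ^ a := le_self_pow₀ (by norm_num) (by omega)
      have := Nat.one_le_pow c 3 (by norm_num)
      omega
  rw [pow_add, pow_add]
  nlinarith

lemma two_mul_three_pow_add_three_pow_lt {a b : ℕ} (ha : 0 < a) (hb : 0 < b) (hab : a ≠ b) :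
    2 * 3 ^ a + 3 ^ b < 3 ^ (a + b) := by
  have hx : 3 ≤ 3 ^ a := le_self_pow₀ (by norm_num) (by omega)
  have hy : 3 ≤ 3 ^ b := le_self_pow₀ (by norm_num) (by omega)
  rw [pow_add]
  rcases (show 2 ≤ a ∨ 2 ≤ b by omega) with h | h
  · have : 9 ≤ 3 ^ a := by simpa using Nat.pow_le_pow_right (show 0 < 3 by norm_num) h
    nlinarith
  · have : 9 ≤ 3 ^ b := by simpa using Nat.pow_le_pow_right (show 0 < 3 by norm_num) h
    nlinarith

namespace DeltaStep

variable {α : Type*}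

def weight (l : List (List α)) : ℕ := (l.map fun w => 3 ^ w.length).sum

@[simp]
lemma weight_nil : weight ([] : List (List α)) = 0 := rfl

@[simp]
lemma weight_cons (w : List α) (l : List (List α)) :
    weight (w :: l) = 3 ^ w.length + weight l := List.sum_cons

@[simp]
lemma weight_append (l t : List (List α)) : weight (l ++ t) = weight l + weight t := by
  simp [weight]

lemma weight_le_of_sublist {l t : List (List α)} (h : l.Sublist t) : weight l ≤ weight t :=
  (h.map _).sum_le_sum fun _ _ => Nat.zero_le _

lemma weight_le_of_subperm {l t : List (List α)} (h : l.Subperm t) : weight l ≤ weight t := by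
  obtain ⟨l'', hperm, hsub⟩ := h
  exact ((hperm.map _).sum_eq).symm.trans_le (weight_le_of_sublist hsub)

variable [DecidableEq α]

lemma weight_erase {x : List α} {l : List (List α)} (hx : x ∈ l) :
    3 ^ x.length + weight (l.erase x) = weight l := by
  rw [← weight_cons, weight, weight, ((List.perm_cons_erase hx).map _).sum_eq]

lemma weight_erase_le (x : List α) (l : List (List α)) : weight (l.erase x) ≤ weight l :=
  weight_le_of_sublist List.erase_sublist

lemma weight_dedup_filter_append_le (p : List α → Bool) (t u : List (List α)) :
    weight ((t ++ u).filter p).dedup ≤ weight t + weight u.dedup := by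
  rw [← weight_append]
  refine weight_le_of_subperm (List.subperm_of_subset (List.nodup_dedup _) fun w hw => ?_)
  simp only [List.mem_dedup, List.mem_filter, List.mem_append] at hw ⊢
  exact hw.1

lemma weight_dedup_lt {M N L : List α} (hN : N ≠ []) (hML : M ++ L ≠ []) :
    weight [M, N, L].dedup < 3 ^ (M ++ N).length + 3 ^ (N ++ L).length :=
  calc weight [M, N, L].dedup ≤ weight [M, N, L] := weight_le_of_sublist (List.dedup_sublist _)
    _ = 3 ^ M.length + 3 ^ N.length + 3 ^ L.length := by simp [add_assoc]
    _ < 3 ^ (M ++ N).length + 3 ^ (N ++ L).length := by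
      simpa using three_pow_add_three_pow_add_three_pow_lt (List.length_pos_iff.mpr hN)
        (by simpa using List.length_pos_iff.mpr hML)

lemma weight_dedup_lt_of_self_overlap {M N L : List α} (h : M ++ N = N ++ L) (hN : N ≠ [])
    (hML : M ++ L ≠ []) : weight [M, N, L].dedup < 3 ^ (M ++ N).length := by
  have hNlen : 0 < N.length := List.length_pos_iff.mpr hN
  by_cases hMN : M.length = N.length
  · obtain ⟨rfl, rfl⟩ := List.append_inj h hMN
    have hdedup : [M, M, M].dedup = [M] := by simp
    simpa [hdedup] using Nat.pow_lt_pow_right (by norm_num : 1 < 3)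
      (by omega : M.length < M.length + M.length)
  · have hlen := congrArg List.length h
    have hMLlen := List.length_pos_iff.mpr hML
    simp only [List.length_append] at hlen hMLlen
    calc weight [M, N, L].dedup ≤ weight [M, N, L] := weight_le_of_sublist (List.dedup_sublist _)
      _ = 2 * 3 ^ M.length + 3 ^ N.length := by simp [show L.length = M.length by omega]; ring
      _ < 3 ^ (M ++ N).length := by
        simpa using two_mul_three_pow_add_three_pow_lt (by omega) hNlen hMN

theorem weight_lt {l l' : List (List α)} (h : DeltaStep l l') : weight l' < weight l := by
  obtain ⟨x, y, M, N, L, hx, hy, rfl, rfl, hN, hML, rfl⟩ := h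
  refine (weight_dedup_filter_append_le _ _ _).trans_lt ?_
  have hl := weight_erase hx
  by_cases hself : M ++ N = N ++ L
  · have hrest := weight_erase_le (M ++ N) (l.erase (M ++ N))
    have hnew := weight_dedup_lt_of_self_overlap hself hN hML
    rw [← hself]
    omega
  · have hyx : N ++ L ∈ l.erase (M ++ N) := (List.mem_erase_of_ne (Ne.symm hself)).mpr hy
    have hrest := weight_erase hyx
    have hnew := weight_dedup_lt hN hML
    omega

end DeltaStep

theorem stmt_3_general {α : Type*} [DecidableEq α] (Y : List (List α)) :
    ∃ V : List (List α), Relation.ReflTransGen DeltaStep Y V ∧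
      ∀ x ∈ V, ∀ y ∈ V, ¬ Overlap x y := by
  have hwf : WellFounded (flip (DeltaStep (α := α))) :=
    Subrelation.wf (fun h => DeltaStep.weight_lt h) (measure DeltaStep.weight).wf
  refine Relation.exists_reflTransGen_of_wellFounded hwf (fun l hl => ?_) Y
  push Not at hl
  obtain ⟨x, hx, y, hy, M, N, L, hxMN, hyNL, hN, hML⟩ := hl
  exact ⟨_, x, y, M, N, L, hx, hy, hxMN, hyNL, hN, hML, rfl⟩

/-- Makanin, Lemma 2: the division algorithm Δ, started on any reduced list of words,
terminates after finitely many steps in a list containing no overlapping pair. -/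
theorem stmt_3 {α : Type*} [DecidableEq α] (Y : List (List α)) (hY : ReducedList Y) :
    ∃ V : List (List α), Relation.ReflTransGen DeltaStep Y V ∧
      ∀ x ∈ V, ∀ y ∈ V, ¬ Overlap x y :=
  stmt_3_general Y
end

section
/- For the list V_1, …, V_k output by the division algorithm Δ applied to a reduced list Y_1, …, Y_t: (1) V_1, …, V_k is a reduced list of pairwise non-overlapping words; (2) every Y_i is a concatenation of words from V_1, …, V_k; (3) every V_j occurs as a factor in such a concatenation of some Y_i. -/
/-!
Properties (2) and (3) together say that the output refines the input. Refinement is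
transitive, so it suffices to check it for a single step of Δ. A step replaces `Y₁ = M·N` by
`M, N` and `Y₂ = N·L` by `N, L`, so every new word is a piece of one of the removed ones, and
discarding empty words and duplicates affects neither property. Reducedness of the output is
built into the last step.
-/

section Refinement

variable {α : Type*}

def IsFactorization (V ws : List (List α)) (y : List α) : Prop :=
  (∀ w ∈ ws, w ∈ V) ∧ ws.flatten = y

structure Refines (Y V : List (List α)) : Prop where
  factor : ∀ y ∈ Y, ∃ ws, IsFactorization V ws y
  cover : ∀ v ∈ V, ∃ y ∈ Y, ∃ ws, IsFactorization V ws y ∧ v ∈ ws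

theorem isFactorization_singleton {V : List (List α)} {y : List α} (hy : y ∈ V) :
    IsFactorization V [y] y :=
  ⟨by simpa using hy, by simp⟩

theorem IsFactorization.flatMap {l l' ws : List (List α)} {y : List α}
    {r : List α → List (List α)} (h : IsFactorization l ws y)
    (hr : ∀ w ∈ ws, IsFactorization l' (r w) w) :
    IsFactorization l' (ws.flatMap r) y := by
  refine ⟨fun u hu => ?_, ?_⟩
  · obtain ⟨w, hw, hu⟩ := List.mem_flatMap.1 hu
    exact (hr w hw).1 u hu
  · rw [List.flatMap, List.flatten_flatten, List.map_map, ← h.2]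
    exact congrArg List.flatten ((List.map_congr_left fun w hw => (hr w hw).2).trans
      (List.map_id' _))

namespace Refines

theorem refl (Y : List (List α)) : Refines Y Y :=
  ⟨fun y hy => ⟨[y], isFactorization_singleton hy⟩,
    fun v hv => ⟨v, hv, [v], isFactorization_singleton hv, List.mem_singleton_self v⟩⟩

theorem trans {Y l l' : List (List α)} (h : Refines Y l) (h' : Refines l l') :
    Refines Y l' := by
  classical
  choose! r hr using h'.factor
  refine ⟨fun y hy => ?_, fun v hv => ?_⟩
  · obtain ⟨ws, hws⟩ := h.factor y hy
    exact ⟨ws.flatMap r, hws.flatMap fun w hw => hr w (hws.1 w hw)⟩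
  · obtain ⟨w, hw, us, hus, hvus⟩ := h'.cover v hv
    obtain ⟨y, hy, ws, hws, hwws⟩ := h.cover w hw
    -- use the factorization of `w` through `v`, and the chosen ones for all other words
    refine ⟨y, hy, ws.flatMap (Function.update r w us), hws.flatMap fun u hu => ?_,
      List.mem_flatMap.2 ⟨w, hwws, by simpa using hvus⟩⟩
    rcases eq_or_ne u w with rfl | hne
    · simpa using hus
    · simpa [hne] using hr u (hws.1 u hu)

end Refines

theorem refines_filter_nonempty_dedup [DecidableEq α] (B : List (List α)) :
    Refines B (B.filter (fun w => !w.isEmpty)).dedup := by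
  refine ⟨fun b hb => ⟨[b].filter (fun w => !w.isEmpty), fun u hu => ?_,
    List.flatten_filter_not_isEmpty.trans (by simp)⟩, fun v hv => ?_⟩
  · obtain ⟨hu, hne⟩ := List.mem_filter.1 hu
    rw [List.mem_singleton.1 hu] at hne ⊢
    exact List.mem_dedup.2 (List.mem_filter.2 ⟨hb, hne⟩)
  · exact ⟨v, (List.mem_filter.1 (List.mem_dedup.1 hv)).1, [v], isFactorization_singleton hv,
      List.mem_singleton_self v⟩

theorem refines_erase_erase_append [DecidableEq α] {l : List (List α)} {Y1 Y2 M N L : List α}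
    (hY1 : Y1 ∈ l) (hY2 : Y2 ∈ l) (hMN : Y1 = M ++ N) (hNL : Y2 = N ++ L) :
    Refines l ((l.erase Y1).erase Y2 ++ [M, N, L]) := by
  set B := (l.erase Y1).erase Y2 ++ [M, N, L]
  have hY1fac : IsFactorization B [M, N] Y1 := ⟨by simp [B], by simp [hMN]⟩
  have hY2fac : IsFactorization B [N, L] Y2 := ⟨by simp [B], by simp [hNL]⟩
  refine ⟨fun w hw => ?_, fun v hv => ?_⟩
  · by_cases h1 : w = Y1
    · exact ⟨_, h1 ▸ hY1fac⟩
    by_cases h2 : w = Y2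
    · exact ⟨_, h2 ▸ hY2fac⟩
    exact ⟨[w], isFactorization_singleton
      (List.mem_append_left _ ((List.mem_erase_of_ne h2).2 ((List.mem_erase_of_ne h1).2 hw)))⟩
  · rcases List.mem_append.1 hv with hv' | hv'
    · exact ⟨v, List.mem_of_mem_erase (List.mem_of_mem_erase hv'), [v],
        isFactorization_singleton hv, List.mem_singleton_self v⟩
    · simp only [List.mem_cons, List.not_mem_nil, or_false] at hv'
      rcases hv' with rfl | rfl | rfl
      · exact ⟨Y1, hY1, _, hY1fac, by simp⟩
      · exact ⟨Y1, hY1, _, hY1fac, by simp⟩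
      · exact ⟨Y2, hY2, _, hY2fac, by simp⟩

namespace DeltaStep

variable [DecidableEq α] {l l' : List (List α)}

theorem refines (h : DeltaStep l l') : Refines l l' := by
  obtain ⟨Y1, Y2, M, N, L, hY1, hY2, hMN, hNL, -, -, rfl⟩ := h
  exact (refines_erase_erase_append hY1 hY2 hMN hNL).trans (refines_filter_nonempty_dedup _)

theorem reducedList (h : DeltaStep l l') : ReducedList l' := by
  obtain ⟨Y1, Y2, M, N, L, -, -, -, -, -, -, rfl⟩ := h
  refine ⟨fun w hw => ?_, List.nodup_dedup _⟩
  simpa using (List.mem_filter.1 (List.mem_dedup.1 hw)).2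

end DeltaStep

theorem Refines.of_reflTransGen_deltaStep [DecidableEq α] {Y V : List (List α)}
    (h : Relation.ReflTransGen DeltaStep Y V) : Refines Y V := by
  induction h with
  | refl => exact Refines.refl Y
  | tail _ hstep ih => exact ih.trans hstep.refines

theorem ReducedList.of_reflTransGen_deltaStep [DecidableEq α] {Y V : List (List α)}
    (hY : ReducedList Y) (h : Relation.ReflTransGen DeltaStep Y V) : ReducedList V := by
  rcases h.cases_tail with rfl | ⟨_, -, hstep⟩
  · exact hY
  · exact hstep.reducedList

end Refinement

/-- Makanin, Lemma 3: if `Δ[Y₁,…,Y_t] = V₁,…,V_k` then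
(1) the output is a reduced list of pairwise non-overlapping words;
(2) every `Y_i` is a concatenation of words from the output;
(3) every `V_j` occurs as a factor in such a concatenation of some `Y_i`. -/
theorem stmt_4 {α : Type*} [DecidableEq α] (Y V : List (List α))
    (hY : ReducedList Y) (hrun : Relation.ReflTransGen DeltaStep Y V)
    (hterm : ∀ x ∈ V, ∀ y ∈ V, ¬ Overlap x y) :
    (ReducedList V ∧ ∀ x ∈ V, ∀ y ∈ V, ¬ Overlap x y) ∧
    (∀ y ∈ Y, ∃ ws : List (List α), (∀ w ∈ ws, w ∈ V) ∧ ws.flatten = y) ∧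
    (∀ v ∈ V, ∃ y ∈ Y, ∃ ws : List (List α),
        (∀ w ∈ ws, w ∈ V) ∧ ws.flatten = y ∧ v ∈ ws) := by
  obtain ⟨hfactor, hcover⟩ := Refines.of_reflTransGen_deltaStep hrun
  refine ⟨⟨hY.of_reflTransGen_deltaStep hrun, hterm⟩, hfactor, fun v hv => ?_⟩
  obtain ⟨y, hy, ws, ⟨hws, hflat⟩, hvws⟩ := hcover v hv
  exact ⟨y, hy, ws, hws, hflat, hvws⟩
end

section
/- If Δ[Y_1, …, Y_t] = V_1, …, V_k and every Y_i is two-sided invertible in a monoid Π (interpreting words over the generators of Π), then every V_j is two-sided invertible in Π. -/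
/-- The value of a word in a monoid `Π`, interpreting each letter via `g`. -/
def evalWord {α : Type*} {P : Type*} [Monoid P] (g : α → P) (w : List α) : P :=
  (w.map g).prod

/-- Two-sided invertibility of an element of a monoid. -/
def TwoSidedInvertible {M : Type*} [Monoid M] (A : M) : Prop :=
  (∃ U : M, U * A = 1) ∧ (∃ V : M, A * V = 1)

lemma tsi_iff_isUnit {M : Type*} [Monoid M] (A : M) :
    TwoSidedInvertible A ↔ IsUnit A := by
  constructor
  · rintro ⟨⟨U, hU⟩, ⟨W, hW⟩⟩
    have hUW : U = W := by
      calc U = U * (A * W) := by rw [hW, mul_one]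
        _ = (U * A) * W := by rw [mul_assoc]
        _ = W := by rw [hU, one_mul]
    exact ⟨⟨A, W, hW, hUW ▸ hU⟩, rfl⟩
  · rintro ⟨u, rfl⟩
    exact ⟨⟨u.inv, u.inv_val⟩, ⟨u.inv, u.val_inv⟩⟩

lemma evalWord_append {α : Type*} {P : Type*} [Monoid P] (g : α → P) (a b : List α) :
    evalWord g (a ++ b) = evalWord g a * evalWord g b := by
  simp [evalWord]

/-- If `X*Y` and `Y*Z` are units, then `X`, `Y`, `Z` are units. -/
lemma units_of_overlap {M : Type*} [Monoid M] {X Y Z : M}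
    (h1 : IsUnit (X * Y)) (h2 : IsUnit (Y * Z)) :
    IsUnit X ∧ IsUnit Y ∧ IsUnit Z := by
  obtain ⟨⟨A, hA⟩, -⟩ := (tsi_iff_isUnit _).2 h1  -- A * (X*Y) = 1
  obtain ⟨-, ⟨B, hB⟩⟩ := (tsi_iff_isUnit _).2 h2  -- (Y*Z) * B = 1
  have hY : IsUnit Y := by
    refine (tsi_iff_isUnit Y).1 ⟨⟨A * X, ?_⟩, ⟨Z * B, ?_⟩⟩
    · rw [mul_assoc, hA]
    · rw [← mul_assoc, hB]
  have hX : IsUnit X := by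
    have : X = (X * Y) * ↑hY.unit⁻¹ := by
      rw [mul_assoc, IsUnit.mul_val_inv, mul_one]
    rw [this]; exact h1.mul (Units.isUnit _)
  have hZ : IsUnit Z := by
    have : Z = ↑hY.unit⁻¹ * (Y * Z) := by
      rw [← mul_assoc, IsUnit.val_inv_mul, one_mul]
    rw [this]; exact (Units.isUnit _).mul h2
  exact ⟨hX, hY, hZ⟩

lemma step_preserves {α : Type*} [DecidableEq α] {P : Type*} [Monoid P] (g : α → P)
    {l l' : List (List α)} (h : DeltaStep l l')
    (hinv : ∀ y ∈ l, TwoSidedInvertible (evalWord g y)) :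
    ∀ y ∈ l', TwoSidedInvertible (evalWord g y) := by
  obtain ⟨Y1, Y2, M, N, L, h1, h2, e1, e2, -, -, rfl⟩ := h
  have u1 : IsUnit (evalWord g M * evalWord g N) := by
    rw [← evalWord_append, ← e1]; exact (tsi_iff_isUnit _).1 (hinv _ h1)
  have u2 : IsUnit (evalWord g N * evalWord g L) := by
    rw [← evalWord_append, ← e2]; exact (tsi_iff_isUnit _).1 (hinv _ h2)
  obtain ⟨uM, uN, uL⟩ := units_of_overlap u1 u2
  intro y hy
  rw [List.mem_dedup, List.mem_filter, List.mem_append] at hy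
  rw [tsi_iff_isUnit]
  rcases hy.1 with hy' | hy'
  · exact (tsi_iff_isUnit _).1 <| hinv y
      (List.mem_of_mem_erase (List.mem_of_mem_erase hy'))
  · simp only [List.mem_cons, List.mem_singleton] at hy'
    rcases hy' with rfl | rfl | rfl | h
    · exact uM
    · exact uN
    · exact uL
    · simp at h

/-- Makanin, Lemma 5: if `Δ[Y₁,…,Y_t] = V₁,…,V_k` and every `Y_i` is two-sided
invertible in the monoid `Π`, then every `V_j` is two-sided invertible in `Π`. -/
theorem stmt_5 {α : Type*} [DecidableEq α] {P : Type*} [Monoid P] (g : α → P)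
    (Y V : List (List α))
    (hrun : Relation.ReflTransGen DeltaStep Y V)
    (hterm : ∀ x ∈ V, ∀ y ∈ V, ¬ Overlap x y)
    (hinv : ∀ y ∈ Y, TwoSidedInvertible (evalWord g y)) :
    ∀ v ∈ V, TwoSidedInvertible (evalWord g v) := by
  clear hterm
  induction hrun with
  | refl => exact hinv
  | tail _ hstep ih => exact step_preserves g hstep ih
end

section
/- If words X and Y are equal in the semigroup V of a distinguished tuple, then the finite sets 𝔗(X) and 𝔗(Y) have a common element; conversely, if 𝔗(X) and 𝔗(Y) share a common element, then X = Y in V. -/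
/-- An elementary insertion for the monoid presented by the relations `A = 1`, `A ∈ R`:
`X·Y → X·A·Y`.  Its equivalence closure `Relation.EqvGen (MInsert R)` is exactly
equality of words in the presented semigroup `V`. -/
def MInsert {α : Type*} (R : List (List α)) (x y : List α) : Prop :=
  ∃ P Q A : List α, A ∈ R ∧ x = P ++ Q ∧ y = P ++ A ++ Q

/-- A non-increasing replacement: `X·A·Y → X·B·Y` with `|B| ≤ |A|` and `A = B` in `V`. -/
def NonIncStep {α : Type*} (R : List (List α)) (x y : List α) : Prop :=
  ∃ P A B Q : List α, x = P ++ A ++ Q ∧ y = P ++ B ++ Q ∧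
    B.length ≤ A.length ∧ Relation.EqvGen (MInsert R) A B

/-- `Z ∈ 𝔗(X)`: `Z` is obtainable from `X` by a finite sequence of
non-increasing replacements. -/
def TSet {α : Type*} (R : List (List α)) (X Z : List α) : Prop :=
  Relation.ReflTransGen (NonIncStep R) X Z

/-- A final word: no sequence of non-increasing replacements strictly shortens it. -/
def FinalWord {α : Type*} (R : List (List α)) (T : List α) : Prop :=
  ∀ Z, TSet R T Z → Z.length = T.length

lemma minsert_append {α : Type*} {R : List (List α)} {A B : List α} (P Q : List α)
    (h : MInsert R A B) : MInsert R (P ++ A ++ Q) (P ++ B ++ Q) := by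
  obtain ⟨P', Q', A', hA', hx, hy⟩ := h
  exact ⟨P ++ P', Q' ++ Q, A', hA', by simp [hx], by simp [hy]⟩

lemma eqv_append {α : Type*} {R : List (List α)} {A B : List α} (P Q : List α)
    (h : Relation.EqvGen (MInsert R) A B) :
    Relation.EqvGen (MInsert R) (P ++ A ++ Q) (P ++ B ++ Q) := by
  induction h with
  | rel x y hxy => exact Relation.EqvGen.rel _ _ (minsert_append P Q hxy)
  | refl x => exact Relation.EqvGen.refl _
  | symm x y _ ih => exact Relation.EqvGen.symm _ _ ih
  | trans x y z _ _ ih1 ih2 => exact Relation.EqvGen.trans _ _ _ ih1 ih2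

lemma tset_eqv {α : Type*} {R : List (List α)} {X Z : List α} (h : TSet R X Z) :
    Relation.EqvGen (MInsert R) X Z := by
  induction h with
  | refl => exact Relation.EqvGen.refl _
  | tail _ hstep ih =>
    obtain ⟨P, A, B, Q, hx, hy, _, hAB⟩ := hstep
    exact Relation.EqvGen.trans _ _ _ ih (hx ▸ hy ▸ eqv_append P Q hAB)

lemma tset_len_le {α : Type*} {R : List (List α)} {X Z : List α} (h : TSet R X Z) :
    Z.length ≤ X.length := by
  induction h with
  | refl => exact le_refl _
  | tail _ hstep ih =>
    obtain ⟨P, A, B, Q, hx, hy, hlen, _⟩ := hstep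
    subst hx; subst hy
    simp only [List.length_append] at ih ⊢
    omega

open Classical in
lemma exists_minimal {α : Type*} (R : List (List α)) (X : List α) :
    ∃ T, TSet R X T ∧ FinalWord R T := by
  have hne : ∃ n, ∃ Z, TSet R X Z ∧ Z.length = n := ⟨X.length, X, Relation.ReflTransGen.refl, rfl⟩
  obtain ⟨Z, hZ, hZlen⟩ := Nat.find_spec hne
  refine ⟨Z, hZ, fun W hW => ?_⟩
  have hXW : TSet R X W := hZ.trans hW
  have h1 : W.length ≤ Z.length := hZlen ▸ tset_len_le hW
  have h2 : Nat.find hne ≤ W.length := Nat.find_min' hne ⟨W, hXW, rfl⟩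
  omega

/-- Makanin, Lemma 24: in the semigroup `V` of a distinguished tuple, two words `X` and
`Y` are equal in `V` if and only if `𝔗(X)` and `𝔗(Y)` have a common element.  The
distinguished-tuple property enters through the hypothesis `hdist` (Lemma 23): if two
final words are equal in `V`, then each belongs to the `𝔗`-set of the other. -/
theorem stmt_7 {α : Type*} (R : List (List α))
    (hdist : ∀ X1 Y1 : List α, FinalWord R X1 → FinalWord R Y1 →
      Relation.EqvGen (MInsert R) X1 Y1 → TSet R Y1 X1)
    (X Y : List α) :
    Relation.EqvGen (MInsert R) X Y ↔ ∃ Z, TSet R X Z ∧ TSet R Y Z := by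
  constructor
  · intro hXY
    obtain ⟨X1, hX1, hX1f⟩ := exists_minimal R X
    obtain ⟨Y1, hY1, hY1f⟩ := exists_minimal R Y
    have heq : Relation.EqvGen (MInsert R) X1 Y1 :=
      Relation.EqvGen.trans _ _ _ (Relation.EqvGen.symm _ _ (tset_eqv hX1))
        (Relation.EqvGen.trans _ _ _ hXY (tset_eqv hY1))
    exact ⟨X1, hX1, hY1.trans (hdist X1 Y1 hX1f hY1f heq)⟩
  · rintro ⟨Z, hXZ, hYZ⟩
    exact Relation.EqvGen.trans _ _ _ (tset_eqv hXZ)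
      (Relation.EqvGen.symm _ _ (tset_eqv hYZ))
end
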